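/- arXiv:1312.3827 — 2 statements merged into one kernel-verified Lean document; each statement's English description precedes it below -/
import Mathlib

section
/- For a square-summable sequence φ: ℤ^d → ℂ and any index k with 0 ≤ k < d, sup over the (k+1)-th coordinate of the partial ℓ² norm over the first k coordinates satisfies sup_{ζ_{k+1}∈ℤ} [φ]_k ≤ [D_{k+1}φ]_{k+1}^{1/2} · [φ]_{k+1}^{1/2}, where [φ]_k := (∑_{ζ_1,…,ζ_k ∈ ℤ} |φ(ζ)|²)^{1/2}. -/
noncomputable section

/-- Partial difference operator in direction `i` on ℤ^d. -/
def Dop {d : ℕ} (i : Fin d) (φ : (Fin d → ℤ) → ℂ) : (Fin d → ℤ) → ℂ :=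
  fun ζ => φ (Function.update ζ i (ζ i + 1)) - φ ζ

/-- The ℓ²(ℤ^d) norm. -/
def l2 {d : ℕ} (φ : (Fin d → ℤ) → ℂ) : ℝ := Real.sqrt (∑' ζ : Fin d → ℤ, ‖φ ζ‖ ^ 2)

/-- The ℓ∞(ℤ^d) norm. -/
def lsup {d : ℕ} (φ : (Fin d → ℤ) → ℂ) : ℝ := ⨆ ζ : Fin d → ℤ, ‖φ ζ‖

/-- The ℓ²(ℤ^d) norm of the discrete gradient. -/
def gradn {d : ℕ} (φ : (Fin d → ℤ) → ℂ) : ℝ :=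
  Real.sqrt (∑ i : Fin d, ∑' ζ : Fin d → ℤ, ‖Dop i φ ζ‖ ^ 2)

/-- The partial ℓ² norm `[φ]_k` over the first `k` coordinates, as a function of the
remaining coordinates of `ζ`. -/
def pnorm {d : ℕ} (k : ℕ) (φ : (Fin d → ℤ) → ℂ) (ζ : Fin d → ℤ) : ℝ :=
  Real.sqrt (∑' w : Fin k → ℤ,
    ‖φ (fun i => if h : (i : ℕ) < k then w ⟨i, h⟩ else ζ i)‖ ^ 2)

/-! Fix the first `k` coordinates `w` and let `g s = ‖φ (w, s)‖²` along the `(k+1)`-th axis.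
Since `g` vanishes at `±∞`, telescoping from both sides gives `2 g t ≤ ∑ₛ |g (s + 1) - g s|`, and
`|‖a‖² - ‖b‖²| ≤ ‖a - b‖ (‖a‖ + ‖b‖)`. Summing over `w` and applying Cauchy–Schwarz on `ℤ^(k+1)`,
together with the shift invariance of the `ℓ²` norm, gives `2 [φ]ₖ² ≤ 2 [D φ]ₖ₊₁ [φ]ₖ₊₁`. -/

open Filter Topology Function

theorem abs_norm_sq_sub_norm_sq_le {E : Type*} [SeminormedAddCommGroup E] (a b : E) :
    |‖a‖ ^ 2 - ‖b‖ ^ 2| ≤ ‖a - b‖ * (‖a‖ + ‖b‖) := by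
  rw [sq_sub_sq, abs_mul, abs_of_nonneg (by positivity : 0 ≤ ‖a‖ + ‖b‖), mul_comm]
  gcongr
  exact abs_norm_sub_norm_le a b

theorem norm_sub_sq_le {E : Type*} [SeminormedAddCommGroup E] (a b : E) :
    ‖a - b‖ ^ 2 ≤ 2 * (‖a‖ ^ 2 + ‖b‖ ^ 2) :=
  (pow_le_pow_left₀ (norm_nonneg _) (norm_sub_le a b) 2).trans add_sq_le

theorem summable_and_tsum_mul_le_sqrt_mul_sqrt {ι : Type*} {f g : ι → ℝ}
    (hf : ∀ i, 0 ≤ f i) (hg : ∀ i, 0 ≤ g i)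
    (hf2 : Summable fun i => f i ^ 2) (hg2 : Summable fun i => g i ^ 2) :
    (Summable fun i => f i * g i) ∧
      ∑' i, f i * g i ≤ √(∑' i, f i ^ 2) * √(∑' i, g i ^ 2) := by
  simpa [Real.sqrt_eq_rpow] using
    Real.summable_and_inner_le_Lp_mul_Lq_tsum_of_nonneg Real.HolderConjugate.two_two hf hg
      (by simpa using hf2) (by simpa using hg2)

theorem two_mul_le_tsum_of_abs_sub_le {g Δ : ℤ → ℝ} (hg : Tendsto g cofinite (𝓝 0))
    (hΔ : Summable Δ) (hgΔ : ∀ s, |g (s + 1) - g s| ≤ Δ s) (t : ℤ) :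
    2 * g t ≤ ∑' s, Δ s := by
  have hΔ0 : ∀ s, 0 ≤ Δ s := fun s => (abs_nonneg _).trans (hgΔ s)
  have hwindow (n : ℕ) :
      2 * g t - g (t - n) - g (t + n) ≤ ∑ s ∈ Finset.Ico (t - n) (t + n), Δ s := by
    induction n with
    | zero => simp [two_mul]
    | succ n ih =>
      have hstep : t - (n + 1) + 1 = t - n := by ring
      have hlow := (le_abs_self _).trans (hgΔ (t - (n + 1)))
      have hhigh := (neg_le_abs _).trans (hgΔ (t + n))
      rw [hstep] at hlow
      have hsplit : ∑ s ∈ Finset.Ico (t - (n + 1)) (t + n + 1), Δ s =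
          Δ (t - (n + 1)) + ∑ s ∈ Finset.Ico (t - n) (t + n), Δ s + Δ (t + n) := by
        rw [← Finset.sum_Ico_add_eq_sum_Ico_add_one (by omega),
          ← Finset.insert_Ico_add_one_left_eq_Ico (by omega), Finset.sum_insert (by simp), hstep]
      push_cast
      rw [← add_assoc, hsplit]
      linarith
  have hedges : Tendsto (fun n : ℕ => g (t - n) + g (t + n)) atTop (𝓝 0) := by
    rw [← Nat.cofinite_eq_atTop, ← add_zero (0 : ℝ)]
    exact (hg.comp (sub_right_injective.comp Nat.cast_injective).tendsto_cofinite).add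
      (hg.comp ((add_right_injective t).comp Nat.cast_injective).tendsto_cofinite)
  refine le_of_tendsto_of_tendsto' tendsto_const_nhds
    (by simpa using tendsto_const_nhds.add hedges) fun n => ?_
  have := (hwindow n).trans (hΔ.sum_le_tsum _ fun s _ => hΔ0 s)
  linarith

theorem tsum_norm_sq_slice_le_sqrt_mul_sqrt {ι E : Type*} [SeminormedAddCommGroup E]
    {F : ι → ℤ → E} (hF : Summable fun p : ι × ℤ => ‖F p.1 p.2‖ ^ 2) (t : ℤ) :
    ∑' i, ‖F i t‖ ^ 2 ≤
      √(∑' p : ι × ℤ, ‖F p.1 (p.2 + 1) - F p.1 p.2‖ ^ 2) * √(∑' p : ι × ℤ, ‖F p.1 p.2‖ ^ 2) := by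
  let e : ι × ℤ ≃ ι × ℤ := (Equiv.refl ι).prodCongr (Equiv.addRight 1)
  have hF₁ : Summable fun p : ι × ℤ => ‖F p.1 (p.2 + 1)‖ ^ 2 := e.summable_iff.2 hF
  have hF₁_eq : ∑' p : ι × ℤ, ‖F p.1 (p.2 + 1)‖ ^ 2 = ∑' p : ι × ℤ, ‖F p.1 p.2‖ ^ 2 :=
    e.tsum_eq fun p : ι × ℤ => ‖F p.1 p.2‖ ^ 2
  have hD : Summable fun p : ι × ℤ => ‖F p.1 (p.2 + 1) - F p.1 p.2‖ ^ 2 :=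
    .of_nonneg_of_le (fun _ => by positivity) (fun _ => norm_sub_sq_le _ _)
      ((hF₁.add hF).mul_left 2)
  obtain ⟨hΔ₁, hcs₁⟩ := summable_and_tsum_mul_le_sqrt_mul_sqrt (fun _ => norm_nonneg _)
    (fun _ => norm_nonneg _) hD hF₁
  obtain ⟨hΔ₀, hcs₀⟩ := summable_and_tsum_mul_le_sqrt_mul_sqrt (fun _ => norm_nonneg _)
    (fun _ => norm_nonneg _) hD hF
  set Δ : ι × ℤ → ℝ := fun p => ‖F p.1 (p.2 + 1) - F p.1 p.2‖ * ‖F p.1 (p.2 + 1)‖ +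
    ‖F p.1 (p.2 + 1) - F p.1 p.2‖ * ‖F p.1 p.2‖ with hΔ_def
  have hΔ : Summable Δ := hΔ₁.add hΔ₀
  have hslice (i : ι) : 2 * ‖F i t‖ ^ 2 ≤ ∑' s, Δ (i, s) :=
    two_mul_le_tsum_of_abs_sub_le (hF.prod_factor i).tendsto_cofinite_zero (hΔ.prod_factor i)
      (fun s => (abs_norm_sq_sub_norm_sq_le _ _).trans_eq (mul_add _ _ _)) t
  have hcol : Summable fun i => ‖F i t‖ ^ 2 :=
    hF.comp_injective (i := fun i => (i, t)) fun i j hij => (Prod.ext_iff.1 hij).1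
  have htwice : 2 * ∑' i, ‖F i t‖ ^ 2 ≤ 2 * (√(∑' p : ι × ℤ, ‖F p.1 (p.2 + 1) - F p.1 p.2‖ ^ 2) *
      √(∑' p : ι × ℤ, ‖F p.1 p.2‖ ^ 2)) :=
    calc 2 * ∑' i, ‖F i t‖ ^ 2 = ∑' i, 2 * ‖F i t‖ ^ 2 := tsum_mul_left.symm
      _ ≤ ∑' i, ∑' s, Δ (i, s) := hcol.mul_left 2 |>.tsum_le_tsum hslice hΔ.prod
      _ = ∑' p, Δ p := hΔ.tsum_prod.symm
      _ ≤ _ := by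
        rw [hΔ_def, hΔ₁.tsum_add hΔ₀, two_mul]
        exact add_le_add (hcs₁.trans_eq (by rw [hF₁_eq])) hcs₀
  linarith

def overwriteInit {α : Type*} {k d : ℕ} (w : Fin k → α) (ζ : Fin d → α) : Fin d → α :=
  fun i => if h : (i : ℕ) < k then w ⟨i, h⟩ else ζ i

theorem pnorm_eq_sqrt_tsum {d : ℕ} (k : ℕ) (φ : (Fin d → ℤ) → ℂ) (ζ : Fin d → ℤ) :
    pnorm k φ ζ = √(∑' w : Fin k → ℤ, ‖φ (overwriteInit w ζ)‖ ^ 2) :=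
  rfl

theorem overwriteInit_update {α : Type*} {k d : ℕ} (w : Fin k → α) (ζ : Fin d → α) {i : Fin d}
    (hi : k ≤ i) (x : α) :
    overwriteInit w (update ζ i x) = update (overwriteInit w ζ) i x := by
  ext j
  rcases eq_or_ne j i with rfl | hj
  · simp [overwriteInit, hi.not_gt]
  · simp [overwriteInit, hj]

theorem overwriteInit_snoc {α : Type*} {k d : ℕ} (hk : k < d) (w : Fin k → α) (x : α)
    (ζ : Fin d → α) :
    overwriteInit (Fin.snoc w x : Fin (k + 1) → α) ζ = update (overwriteInit w ζ) ⟨k, hk⟩ x := by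
  ext j
  rcases eq_or_ne j ⟨k, hk⟩ with rfl | hj
  · simp only [overwriteInit, update_self, Nat.lt_succ_self, dite_true]
    exact Fin.snoc_last (α := fun _ => α) x w
  · have hj' : (j : ℕ) ≠ k := fun h => hj (Fin.ext h)
    by_cases hjk : (j : ℕ) < k
    · simp [overwriteInit, hj, hjk, Fin.snoc, Nat.lt_succ_of_lt hjk]
    · simp [overwriteInit, hj, hjk, show ¬ (j : ℕ) < k + 1 by omega]

theorem overwriteInit_injective {α : Type*} {k d : ℕ} (hk : k ≤ d) (ζ : Fin d → α) :
    Injective fun w : Fin k → α => overwriteInit w ζ := by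
  intro w w' h
  ext i
  simpa [overwriteInit] using congrFun h ⟨i, i.2.trans_le hk⟩

theorem Dop_update {d : ℕ} (i : Fin d) (φ : (Fin d → ℤ) → ℂ) (ζ : Fin d → ℤ) (t : ℤ) :
    Dop i φ (update ζ i t) = φ (update ζ i (t + 1)) - φ (update ζ i t) := by
  simp [Dop]

theorem update_overwriteInit_injective {α : Type*} {k d : ℕ} (hk : k < d) (ζ : Fin d → α) :
    Injective fun p : (Fin k → α) × α => update (overwriteInit p.1 ζ) ⟨k, hk⟩ p.2 := by
  rintro ⟨w, x⟩ ⟨w', x'⟩ h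
  simp only [← overwriteInit_snoc hk] at h
  obtain ⟨rfl, rfl⟩ := Fin.snoc_injective2 (overwriteInit_injective hk ζ h)
  rfl

theorem pnorm_succ_eq_sqrt_tsum {d k : ℕ} (hk : k < d) (ψ : (Fin d → ℤ) → ℂ) (ζ : Fin d → ℤ) :
    pnorm (k + 1) ψ ζ =
      √(∑' p : (Fin k → ℤ) × ℤ, ‖ψ (update (overwriteInit p.1 ζ) ⟨k, hk⟩ p.2)‖ ^ 2) := by
  rw [pnorm_eq_sqrt_tsum, ← ((Equiv.prodComm _ _).trans (Fin.snocEquiv fun _ => ℤ)).tsum_eq]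
  congr 1
  refine tsum_congr fun p => ?_
  rw [← overwriteInit_snoc hk]
  rfl

/-- The Agmon–Cauchy inequality on ℤ^d. -/
theorem agmon_cauchy {d : ℕ} (φ : (Fin d → ℤ) → ℂ)
    (h : Summable fun ζ : Fin d → ℤ => ‖φ ζ‖ ^ 2) (k : ℕ) (hk : k < d) (ζ : Fin d → ℤ) :
    (⨆ t : ℤ, pnorm k φ (Function.update ζ ⟨k, hk⟩ t)) ≤
      Real.sqrt (pnorm (k + 1) (Dop ⟨k, hk⟩ φ) ζ) * Real.sqrt (pnorm (k + 1) φ ζ) := by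
  have hF : Summable fun p : (Fin k → ℤ) × ℤ =>
      ‖φ (update (overwriteInit p.1 ζ) ⟨k, hk⟩ p.2)‖ ^ 2 :=
    h.comp_injective (update_overwriteInit_injective hk ζ)
  rw [pnorm_succ_eq_sqrt_tsum hk, pnorm_succ_eq_sqrt_tsum hk]
  simp only [Dop_update]
  refine ciSup_le fun t => ?_
  rw [pnorm_eq_sqrt_tsum, ← Real.sqrt_mul (Real.sqrt_nonneg _)]
  simp only [overwriteInit_update _ _ (i := ⟨k, hk⟩) le_rfl]
  exact Real.sqrt_le_sqrt <| tsum_norm_sq_slice_le_sqrt_mul_sqrt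
    (F := fun w t => φ (update (overwriteInit w ζ) ⟨k, hk⟩ t)) hF t
end
end

section
/- For a square-summable sequence φ: ℤ^d → ℂ, we have ‖φ‖_{ℓ∞(ℤ^d)}^{2^d} ≤ ∏_{S ⊆ {1,…,d}} ‖D_S φ‖_{ℓ²(ℤ^d)}, where the product runs over all 2^d subsets S of {1,…,d} and D_S denotes the composition of the partial difference operators D_i for i ∈ S (with D_∅ φ = φ). -/
noncomputable section

/-- The mixed difference operator `D_S` over a set of directions `S`,
given by the inclusion–exclusion formula (the `D_i` commute). -/
def Dmix {d : ℕ} (S : Finset (Fin d)) (φ : (Fin d → ℤ) → ℂ) : (Fin d → ℤ) → ℂ :=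
  fun ζ => ∑ T ∈ S.powerset, (-1 : ℂ) ^ (S.card - T.card) *
    φ (fun i => ζ i + if i ∈ T then 1 else 0)

open Finset Filter

/-! ### Auxiliary lemmas -/

lemma Dmix_empty {d : ℕ} (φ : (Fin d → ℤ) → ℂ) : Dmix ∅ φ = φ := by
  funext ζ
  simp [Dmix]

lemma Dmix_insert {d : ℕ} (i : Fin d) (S : Finset (Fin d)) (hi : i ∉ S)
    (φ : (Fin d → ℤ) → ℂ) : Dmix (insert i S) φ = Dop i (Dmix S φ) := by
  funext ζ
  rw [Dmix, Finset.sum_powerset_insert hi]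
  have h1 : ∀ T ∈ S.powerset,
      (-1 : ℂ) ^ ((insert i S).card - T.card) *
        φ (fun j => ζ j + if j ∈ T then 1 else 0)
      = -((-1 : ℂ) ^ (S.card - T.card) * φ (fun j => ζ j + if j ∈ T then 1 else 0)) := by
    intro T hT
    have hTS : T.card ≤ S.card := Finset.card_le_card (Finset.mem_powerset.1 hT)
    rw [Finset.card_insert_of_notMem hi]
    have : S.card + 1 - T.card = (S.card - T.card) + 1 := by omega
    rw [this, pow_succ]
    ring
  have h2 : ∀ T ∈ S.powerset,
      (-1 : ℂ) ^ ((insert i S).card - (insert i T).card) *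
        φ (fun j => ζ j + if j ∈ insert i T then 1 else 0)
      = (-1 : ℂ) ^ (S.card - T.card) *
        φ (fun j => Function.update ζ i (ζ i + 1) j + if j ∈ T then 1 else 0) := by
    intro T hT
    have hTsub := Finset.mem_powerset.1 hT
    have hiT : i ∉ T := fun hc => hi (hTsub hc)
    rw [Finset.card_insert_of_notMem hi, Finset.card_insert_of_notMem hiT]
    have hc : S.card + 1 - (T.card + 1) = S.card - T.card := by omega
    rw [hc]
    congr 2
    funext j
    rcases eq_or_ne j i with rfl | hj
    · simp [hiT]
    · simp [Function.update_of_ne hj, Finset.mem_insert, hj]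
  rw [Finset.sum_congr rfl h1, Finset.sum_congr rfl h2]
  simp only [Dop, Dmix, Finset.sum_neg_distrib]
  ring

lemma Dop_eq_Dmix {d : ℕ} (i : Fin d) (φ : (Fin d → ℤ) → ℂ) :
    Dop i φ = Dmix {i} φ := by
  have : ({i} : Finset (Fin d)) = insert i ∅ := rfl
  rw [this, Dmix_insert i ∅ (by simp) φ, Dmix_empty]

lemma summable_shift {d : ℕ} {φ : (Fin d → ℤ) → ℂ}
    (h : Summable fun ζ : Fin d → ℤ => ‖φ ζ‖ ^ 2) (c : Fin d → ℤ) :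
    Summable fun ζ : Fin d → ℤ => ‖φ (ζ + c)‖ ^ 2 :=
  h.comp_injective (Equiv.addRight c).injective

lemma summable_Dmix {d : ℕ} {φ : (Fin d → ℤ) → ℂ}
    (h : Summable fun ζ : Fin d → ℤ => ‖φ ζ‖ ^ 2) (S : Finset (Fin d)) :
    Summable fun ζ : Fin d → ℤ => ‖Dmix S φ ζ‖ ^ 2 := by
  have hmaj : Summable fun ζ : Fin d → ℤ =>
      (S.powerset.card : ℝ) * ∑ T ∈ S.powerset, ‖φ (ζ + fun i => if i ∈ T then 1 else 0)‖ ^ 2 := by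
    refine Summable.mul_left _ (summable_sum fun T _ => summable_shift h _)
  refine Summable.of_nonneg_of_le (fun ζ => by positivity) (fun ζ => ?_) hmaj
  have h1 : ‖Dmix S φ ζ‖ ≤ ∑ T ∈ S.powerset, ‖φ (ζ + fun i => if i ∈ T then 1 else 0)‖ := by
    refine (norm_sum_le _ _).trans ?_
    refine Finset.sum_le_sum fun T _ => ?_
    rw [norm_mul, norm_pow, norm_neg, norm_one, one_pow, one_mul]
    exact le_of_eq (congrArg _ (congrArg φ rfl))
  calc ‖Dmix S φ ζ‖ ^ 2
      ≤ (∑ T ∈ S.powerset, ‖φ (ζ + fun i => if i ∈ T then 1 else 0)‖) ^ 2 := by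
        exact pow_le_pow_left₀ (norm_nonneg _) h1 2
    _ ≤ (∑ T ∈ S.powerset, ‖φ (ζ + fun i => if i ∈ T then 1 else 0)‖ ^ 2) *
          ∑ T ∈ S.powerset, (1:ℝ)^2 := by
        have := Finset.sum_mul_sq_le_sq_mul_sq S.powerset
          (fun T => ‖φ (ζ + fun i => if i ∈ T then 1 else 0)‖) (fun _ => 1)
        simpa using this
    _ = (S.powerset.card : ℝ) * ∑ T ∈ S.powerset, ‖φ (ζ + fun i => if i ∈ T then 1 else 0)‖ ^ 2 := by
        simp [mul_comm]

lemma summable_Dop {d : ℕ} {φ : (Fin d → ℤ) → ℂ}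
    (h : Summable fun ζ : Fin d → ℤ => ‖φ ζ‖ ^ 2) (i : Fin d) :
    Summable fun ζ : Fin d → ℤ => ‖Dop i φ ζ‖ ^ 2 := by
  rw [Dop_eq_Dmix]
  exact summable_Dmix h _

lemma summable_mul_of_sq {ι : Type*} {f g : ι → ℝ}
    (hf : Summable fun x => f x ^ 2) (hg : Summable fun x => g x ^ 2)
    (hf0 : ∀ x, 0 ≤ f x) (hg0 : ∀ x, 0 ≤ g x) :
    Summable fun x => f x * g x := by
  refine Summable.of_nonneg_of_le (fun x => mul_nonneg (hf0 x) (hg0 x)) (fun x => ?_)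
    ((hf.add hg).div_const 2)
  nlinarith [sq_nonneg (f x - g x)]

lemma tsum_mul_le_sqrt {ι : Type*} {f g : ι → ℝ}
    (hf : Summable fun x => f x ^ 2) (hg : Summable fun x => g x ^ 2)
    (hf0 : ∀ x, 0 ≤ f x) (hg0 : ∀ x, 0 ≤ g x) :
    ∑' x, f x * g x ≤ Real.sqrt (∑' x, f x ^ 2) * Real.sqrt (∑' x, g x ^ 2) := by
  refine Summable.tsum_le_of_sum_le (summable_mul_of_sq hf hg hf0 hg0) fun s => ?_
  have h1 : (∑ x ∈ s, f x * g x) ^ 2 ≤ (∑ x ∈ s, f x ^ 2) * ∑ x ∈ s, g x ^ 2 :=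
    Finset.sum_mul_sq_le_sq_mul_sq s f g
  have h2 : ∑ x ∈ s, f x * g x ≥ 0 := Finset.sum_nonneg fun x _ => mul_nonneg (hf0 x) (hg0 x)
  have h3 : ∑ x ∈ s, f x * g x ≤ Real.sqrt ((∑ x ∈ s, f x ^ 2) * ∑ x ∈ s, g x ^ 2) := by
    rw [← Real.sqrt_sq h2]
    exact Real.sqrt_le_sqrt h1
  refine h3.trans ?_
  rw [Real.sqrt_mul (Finset.sum_nonneg fun x _ => sq_nonneg _)]
  exact mul_le_mul (Real.sqrt_le_sqrt (Summable.sum_le_tsum s (fun x _ => sq_nonneg _) hf))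
    (Real.sqrt_le_sqrt (Summable.sum_le_tsum s (fun x _ => sq_nonneg _) hg))
    (Real.sqrt_nonneg _) (Real.sqrt_nonneg _)

lemma abs_tsum_le {ι : Type*} (u : ι → ℝ) (h : Summable fun k => |u k|) :
    |∑' k, u k| ≤ ∑' k, |u k| := by
  rw [← Real.norm_eq_abs]
  refine (norm_tsum_le_tsum_norm (f := u) ?_).trans ?_
  · simpa [Real.norm_eq_abs] using h
  · simp [Real.norm_eq_abs]

/-- 1-d telescoping estimate. -/
lemma key1d (g h : ℤ → ℝ) (hg0 : ∀ s, 0 ≤ g s) (hgsum : Summable g)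
    (hh : Summable h) (hΔ : ∀ s, |g (s + 1) - g s| ≤ h s) (t : ℤ) :
    2 * g t ≤ ∑' s, h s := by
  have hh0 : ∀ s, 0 ≤ h s := fun s => (abs_nonneg _).trans (hΔ s)
  have hgz : Tendsto g cofinite (nhds 0) := hgsum.tendsto_cofinite_zero
  have hcof : (atTop : Filter ℤ) ≤ cofinite := by
    rw [Int.cofinite_eq]; exact le_sup_right
  have hcof' : (atBot : Filter ℤ) ≤ cofinite := by
    rw [Int.cofinite_eq]; exact le_sup_left
  -- right side
  have hinj1 : Function.Injective (fun k : ℕ => t + (k : ℤ)) := by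
    intro a b hab; simpa using hab
  have hsum1 : Summable fun k : ℕ => h (t + (k : ℤ)) := hh.comp_injective hinj1
  have habs1 : Summable fun k : ℕ => |g (t + (k : ℤ) + 1) - g (t + (k : ℤ))| :=
    Summable.of_nonneg_of_le (fun k => abs_nonneg _) (fun k => hΔ _) hsum1
  have hu1 : Summable fun k : ℕ => g (t + (k : ℤ) + 1) - g (t + (k : ℤ)) :=
    habs1.of_abs
  have htop : Tendsto (fun n : ℕ => g (t + (n : ℤ))) atTop (nhds 0) := by
    refine hgz.comp (Tendsto.mono_right ?_ hcof)
    exact tendsto_atTop_add_const_left _ t tendsto_natCast_atTop_atTop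
  have hsum1' : HasSum (fun k : ℕ => g (t + (k : ℤ) + 1) - g (t + (k : ℤ))) (-(g t)) := by
    rw [hu1.hasSum_iff_tendsto_nat]
    have hps : ∀ n : ℕ, ∑ k ∈ Finset.range n, (g (t + (k : ℤ) + 1) - g (t + (k : ℤ)))
        = g (t + (n : ℤ)) - g t := by
      intro n
      have hterm : ∀ k : ℕ, g (t + (k : ℤ) + 1) - g (t + (k : ℤ))
          = (fun k : ℕ => g (t + (k : ℤ))) (k + 1) - (fun k : ℕ => g (t + (k : ℤ))) k := by
        intro k
        simp only
        congr 2
        push_cast; ring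
      rw [Finset.sum_congr rfl fun k _ => hterm k,
        Finset.sum_range_sub (fun k : ℕ => g (t + (k : ℤ))) n]
      simp
    simp only [hps]
    simpa using htop.sub_const (g t)
  have hgt1 : g t ≤ ∑' k : ℕ, h (t + (k : ℤ)) := by
    have h1 : |∑' k : ℕ, (g (t + (k : ℤ) + 1) - g (t + (k : ℤ)))| = g t := by
      rw [hsum1'.tsum_eq, abs_neg, abs_of_nonneg (hg0 t)]
    calc g t = |∑' k : ℕ, (g (t + (k : ℤ) + 1) - g (t + (k : ℤ)))| := h1.symm
      _ ≤ ∑' k : ℕ, |g (t + (k : ℤ) + 1) - g (t + (k : ℤ))| :=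
          abs_tsum_le _ habs1
      _ ≤ ∑' k : ℕ, h (t + (k : ℤ)) := Summable.tsum_le_tsum (fun k => hΔ _) habs1 hsum1
  -- left side
  have hinj2 : Function.Injective (fun k : ℕ => t - 1 - (k : ℤ)) := by
    intro a b hab; simp only at hab; omega
  have hsum2 : Summable fun k : ℕ => h (t - 1 - (k : ℤ)) := hh.comp_injective hinj2
  have habs2 : Summable fun k : ℕ => |g (t - (k : ℤ) - 1) - g (t - (k : ℤ))| := by
    refine Summable.of_nonneg_of_le (fun k => abs_nonneg _) (fun k => ?_) hsum2
    have e2 : t - (k : ℤ) - 1 = t - 1 - (k : ℤ) := by ring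
    have e1 : t - 1 - (k : ℤ) + 1 = t - (k : ℤ) := by ring
    rw [e2, abs_sub_comm, ← e1]
    exact hΔ _
  have hu2 : Summable fun k : ℕ => g (t - (k : ℤ) - 1) - g (t - (k : ℤ)) := habs2.of_abs
  have hbot : Tendsto (fun n : ℕ => g (t - (n : ℤ))) atTop (nhds 0) := by
    refine hgz.comp (Tendsto.mono_right ?_ hcof')
    have h1 : Tendsto (fun n : ℕ => -(n : ℤ)) atTop atBot :=
      tendsto_neg_atBot_iff.mpr tendsto_natCast_atTop_atTop
    have h2 := tendsto_atBot_add_const_left _ t h1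
    simpa [sub_eq_add_neg] using h2
  have hsum2' : HasSum (fun k : ℕ => g (t - (k : ℤ) - 1) - g (t - (k : ℤ))) (-(g t)) := by
    rw [hu2.hasSum_iff_tendsto_nat]
    have hps : ∀ n : ℕ, ∑ k ∈ Finset.range n, (g (t - (k : ℤ) - 1) - g (t - (k : ℤ)))
        = g (t - (n : ℤ)) - g t := by
      intro n
      have hterm : ∀ k : ℕ, g (t - (k : ℤ) - 1) - g (t - (k : ℤ))
          = (fun k : ℕ => g (t - (k : ℤ))) (k + 1) - (fun k : ℕ => g (t - (k : ℤ))) k := by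
        intro k
        simp only
        congr 2
        push_cast; ring
      rw [Finset.sum_congr rfl fun k _ => hterm k,
        Finset.sum_range_sub (fun k : ℕ => g (t - (k : ℤ))) n]
      simp
    simp only [hps]
    simpa using hbot.sub_const (g t)
  have hgt2 : g t ≤ ∑' k : ℕ, h (t - 1 - (k : ℤ)) := by
    have h1 : |∑' k : ℕ, (g (t - (k : ℤ) - 1) - g (t - (k : ℤ)))| = g t := by
      rw [hsum2'.tsum_eq, abs_neg, abs_of_nonneg (hg0 t)]
    calc g t = _ := h1.symm
      _ ≤ ∑' k : ℕ, |g (t - (k : ℤ) - 1) - g (t - (k : ℤ))| :=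
          abs_tsum_le _ habs2
      _ ≤ ∑' k : ℕ, h (t - 1 - (k : ℤ)) := by
          refine Summable.tsum_le_tsum (fun k => ?_) habs2 hsum2
          have e2 : t - (k : ℤ) - 1 = t - 1 - (k : ℤ) := by ring
          have e1 : t - 1 - (k : ℤ) + 1 = t - (k : ℤ) := by ring
          rw [e2, abs_sub_comm, ← e1]
          exact hΔ _
  -- combine via Ici / Iio
  let eIci : ℕ ≃ (Set.Ici t) :=
    { toFun := fun k => ⟨t + (k : ℤ), by simp [Set.mem_Ici]⟩
      invFun := fun s => (s.1 - t).toNat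
      left_inv := fun k => by simp
      right_inv := fun s => by
        obtain ⟨s, hs⟩ := s
        simp only [Set.mem_Ici] at hs
        apply Subtype.ext
        simp only
        omega }
  let eIio : ℕ ≃ (Set.Iio t) :=
    { toFun := fun k => ⟨t - 1 - (k : ℤ), by simp only [Set.mem_Iio]; omega⟩
      invFun := fun s => (t - 1 - s.1).toNat
      left_inv := fun k => by simp
      right_inv := fun s => by
        obtain ⟨s, hs⟩ := s
        simp only [Set.mem_Iio] at hs
        apply Subtype.ext
        simp only
        omega }
  have hIci : ∑' k : ℕ, h (t + (k : ℤ)) = ∑' x : Set.Ici t, h x :=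
    eIci.tsum_eq (fun x : Set.Ici t => h x)
  have hIio : ∑' k : ℕ, h (t - 1 - (k : ℤ)) = ∑' x : Set.Iio t, h x :=
    eIio.tsum_eq (fun x : Set.Iio t => h x)
  have hcomb : ∑' x : Set.Ici t, h x + ∑' x : Set.Iio t, h x = ∑' s, h s := by
    have := Summable.tsum_add_tsum_compl (f := h) (s := Set.Ici t) (hh.subtype _) (hh.subtype _)
    rwa [Set.compl_Ici] at this
  linarith [hgt1, hgt2, hIci ▸ hgt1, hIio ▸ hgt2, hcomb]

lemma norm_le_l2 {d : ℕ} {ψ : (Fin d → ℤ) → ℂ}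
    (h : Summable fun ζ : Fin d → ℤ => ‖ψ ζ‖ ^ 2) (ζ : Fin d → ℤ) : ‖ψ ζ‖ ≤ l2 ψ := by
  rw [l2, ← Real.sqrt_sq (norm_nonneg (ψ ζ))]
  exact Real.sqrt_le_sqrt (Summable.le_tsum h ζ (fun j _ => sq_nonneg _))

lemma lsup_pow_le {d : ℕ} (φ : (Fin d → ℤ) → ℂ) {C : ℝ} (hC : 0 ≤ C) {n : ℕ} (hn : n ≠ 0)
    (hp : ∀ ζ, ‖φ ζ‖ ^ n ≤ C) : lsup φ ^ n ≤ C := by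
  have hn' : (n : ℝ) ≠ 0 := Nat.cast_ne_zero.2 hn
  have h1 : ∀ ζ, ‖φ ζ‖ ≤ C ^ ((n : ℝ)⁻¹) := by
    intro ζ
    have h2 := Real.rpow_le_rpow (by positivity) (hp ζ) (by positivity : (0:ℝ) ≤ (n : ℝ)⁻¹)
    rwa [← Real.rpow_natCast (‖φ ζ‖) n, ← Real.rpow_mul (norm_nonneg _),
      mul_inv_cancel₀ hn', Real.rpow_one] at h2
  have h2 : lsup φ ≤ C ^ ((n : ℝ)⁻¹) := ciSup_le h1
  have h0 : 0 ≤ lsup φ := Real.iSup_nonneg fun ζ => norm_nonneg _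
  calc lsup φ ^ n ≤ (C ^ ((n : ℝ)⁻¹)) ^ n := pow_le_pow_left₀ h0 h2 n
    _ = C := by
        rw [← Real.rpow_natCast (C ^ ((n:ℝ)⁻¹)) n, ← Real.rpow_mul hC,
          inv_mul_cancel₀ hn', Real.rpow_one]

/-- Key slicing inequality. -/
lemma slice_sq_le {d : ℕ} (a : (Fin (d + 1) → ℤ) → ℂ)
    (ha : Summable fun ζ : Fin (d+1) → ℤ => ‖a ζ‖ ^ 2) (t : ℤ) :
    (∑' ζ' : Fin d → ℤ, ‖a (Fin.cons t ζ')‖ ^ 2) ≤ l2 a * l2 (Dop 0 a) := by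
  set e := Fin.consEquiv (fun _ : Fin (d+1) => ℤ) with he
  have hDa : Summable fun ζ => ‖Dop 0 a ζ‖ ^ 2 := summable_Dop ha 0
  have haP : Summable fun p : ℤ × (Fin d → ℤ) => ‖a (Fin.cons p.1 p.2)‖ ^ 2 :=
    ha.comp_injective e.injective
  have haP' : Summable fun p : ℤ × (Fin d → ℤ) => ‖a (Fin.cons (p.1 + 1) p.2)‖ ^ 2 := by
    have := haP.comp_injective
      (Equiv.prodCongr (Equiv.addRight (1:ℤ)) (Equiv.refl (Fin d → ℤ))).injective
    exact this
  have hDaP : Summable fun p : ℤ × (Fin d → ℤ) => ‖Dop 0 a (Fin.cons p.1 p.2)‖ ^ 2 :=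
    hDa.comp_injective e.injective
  set g : ℤ → ℝ := fun s => ∑' ζ' : Fin d → ℤ, ‖a (Fin.cons s ζ')‖ ^ 2 with hgdef
  have hg0 : ∀ s, 0 ≤ g s := fun s => tsum_nonneg fun ζ' => sq_nonneg _
  have hgslice : ∀ s : ℤ, Summable fun ζ' : Fin d → ℤ => ‖a (Fin.cons s ζ')‖ ^ 2 :=
    fun s => haP.prod_factor s
  have hgsum : Summable g :=
    ((summable_prod_of_nonneg (fun p => sq_nonneg _)).1 haP).2
  -- the difference substitute
  have hDcons : ∀ (s : ℤ) (ζ' : Fin d → ℤ),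
      Dop 0 a (Fin.cons s ζ') = a (Fin.cons (s+1) ζ') - a (Fin.cons s ζ') := by
    intro s ζ'
    rw [Dop]
    congr 2
    rw [Fin.cons_zero, Fin.update_cons_zero]
  set q : ℤ × (Fin d → ℤ) → ℝ := fun p =>
    ‖Dop 0 a (Fin.cons p.1 p.2)‖ * (‖a (Fin.cons (p.1 + 1) p.2)‖ + ‖a (Fin.cons p.1 p.2)‖)
    with hqdef
  have hq0 : ∀ p, 0 ≤ q p := fun p => mul_nonneg (norm_nonneg _)
    (add_nonneg (norm_nonneg _) (norm_nonneg _))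
  have hq1 : Summable fun p : ℤ × (Fin d → ℤ) =>
      ‖Dop 0 a (Fin.cons p.1 p.2)‖ * ‖a (Fin.cons (p.1 + 1) p.2)‖ :=
    summable_mul_of_sq hDaP haP' (fun p => norm_nonneg _) (fun p => norm_nonneg _)
  have hq2 : Summable fun p : ℤ × (Fin d → ℤ) =>
      ‖Dop 0 a (Fin.cons p.1 p.2)‖ * ‖a (Fin.cons p.1 p.2)‖ :=
    summable_mul_of_sq hDaP haP (fun p => norm_nonneg _) (fun p => norm_nonneg _)
  have hqsum : Summable q := by
    have : q = fun p => ‖Dop 0 a (Fin.cons p.1 p.2)‖ * ‖a (Fin.cons (p.1 + 1) p.2)‖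
        + ‖Dop 0 a (Fin.cons p.1 p.2)‖ * ‖a (Fin.cons p.1 p.2)‖ := by
      funext p; rw [hqdef]; ring
    rw [this]
    exact hq1.add hq2
  -- tsums via equivalences
  have hl2a : Real.sqrt (∑' p : ℤ × (Fin d → ℤ), ‖a (Fin.cons p.1 p.2)‖ ^ 2) = l2 a := by
    rw [l2]
    congr 1
    exact e.tsum_eq (fun ζ => ‖a ζ‖ ^ 2)
  have hl2a' : Real.sqrt (∑' p : ℤ × (Fin d → ℤ), ‖a (Fin.cons (p.1+1) p.2)‖ ^ 2) = l2 a := by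
    rw [← hl2a]
    congr 1
    exact (Equiv.prodCongr (Equiv.addRight (1:ℤ)) (Equiv.refl (Fin d → ℤ))).tsum_eq
      (fun p : ℤ × (Fin d → ℤ) => ‖a (Fin.cons p.1 p.2)‖ ^ 2)
  have hl2Da : Real.sqrt (∑' p : ℤ × (Fin d → ℤ), ‖Dop 0 a (Fin.cons p.1 p.2)‖ ^ 2)
      = l2 (Dop 0 a) := by
    rw [l2]
    congr 1
    exact e.tsum_eq (fun ζ => ‖Dop 0 a ζ‖ ^ 2)
  have hqle : ∑' p : ℤ × (Fin d → ℤ), q p ≤ 2 * (l2 a * l2 (Dop 0 a)) := by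
    have hsplit : ∑' p : ℤ × (Fin d → ℤ), q p
        = (∑' p : ℤ × (Fin d → ℤ), ‖Dop 0 a (Fin.cons p.1 p.2)‖ * ‖a (Fin.cons (p.1 + 1) p.2)‖)
        + ∑' p : ℤ × (Fin d → ℤ), ‖Dop 0 a (Fin.cons p.1 p.2)‖ * ‖a (Fin.cons p.1 p.2)‖ := by
      rw [← Summable.tsum_add hq1 hq2]
      congr 1
      funext p
      rw [hqdef]; ring
    rw [hsplit]
    have c1 := tsum_mul_le_sqrt hDaP haP' (fun p => norm_nonneg _) (fun p => norm_nonneg _)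
    have c2 := tsum_mul_le_sqrt hDaP haP (fun p => norm_nonneg _) (fun p => norm_nonneg _)
    rw [hl2Da, hl2a'] at c1
    rw [hl2Da, hl2a] at c2
    linarith
  set hfun : ℤ → ℝ := fun s => ∑' ζ' : Fin d → ℤ, q (s, ζ') with hhdef
  have hhsum : Summable hfun := ((summable_prod_of_nonneg hq0).1 hqsum).2
  have hhtsum : ∑' s, hfun s = ∑' p : ℤ × (Fin d → ℤ), q p :=
    (Summable.tsum_prod' hqsum (fun s => hqsum.prod_factor s)).symm
  have hΔ : ∀ s : ℤ, |g (s + 1) - g s| ≤ hfun s := by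
    intro s
    have hdiff : g (s+1) - g s
        = ∑' ζ' : Fin d → ℤ, (‖a (Fin.cons (s+1) ζ')‖ ^ 2 - ‖a (Fin.cons s ζ')‖ ^ 2) := by
      rw [hgdef]
      exact (Summable.tsum_sub (hgslice (s+1)) (hgslice s)).symm
    have hsub : Summable fun ζ' : Fin d → ℤ =>
        ‖a (Fin.cons (s+1) ζ')‖ ^ 2 - ‖a (Fin.cons s ζ')‖ ^ 2 :=
      (hgslice (s+1)).sub (hgslice s)
    have hptw : ∀ ζ' : Fin d → ℤ,
        |‖a (Fin.cons (s+1) ζ')‖ ^ 2 - ‖a (Fin.cons s ζ')‖ ^ 2| ≤ q (s, ζ') := by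
      intro ζ'
      set u := a (Fin.cons (s+1) ζ')
      set v := a (Fin.cons s ζ')
      have h1 : ‖u‖ ^ 2 - ‖v‖ ^ 2 = (‖u‖ - ‖v‖) * (‖u‖ + ‖v‖) := by ring
      have h2 : |‖u‖ - ‖v‖| ≤ ‖u - v‖ := abs_norm_sub_norm_le u v
      have h3 : ‖Dop 0 a (Fin.cons s ζ')‖ = ‖u - v‖ := by rw [hDcons]
      rw [hqdef]
      simp only
      rw [h3, h1, abs_mul, abs_of_nonneg (add_nonneg (norm_nonneg u) (norm_nonneg v))]
      exact mul_le_mul_of_nonneg_right h2 (add_nonneg (norm_nonneg u) (norm_nonneg v))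
    rw [hdiff]
    calc |∑' ζ' : Fin d → ℤ, (‖a (Fin.cons (s+1) ζ')‖ ^ 2 - ‖a (Fin.cons s ζ')‖ ^ 2)|
        ≤ ∑' ζ' : Fin d → ℤ, |‖a (Fin.cons (s+1) ζ')‖ ^ 2 - ‖a (Fin.cons s ζ')‖ ^ 2| :=
          abs_tsum_le _ hsub.abs
      _ ≤ ∑' ζ' : Fin d → ℤ, q (s, ζ') := by
          refine Summable.tsum_le_tsum hptw (by simpa using hsub.abs) (hqsum.prod_factor s)
  have hkey := key1d g hfun hg0 hgsum hhsum hΔ t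
  rw [hhtsum] at hkey
  linarith [hqle]

/-- reindexing sums over powersets of mapped finsets -/
lemma sum_powerset_map {α β M : Type*} [DecidableEq α] [DecidableEq β] [AddCommMonoid M]
    (s : Finset α) (f : α ↪ β) (g : Finset β → M) :
    ∑ T ∈ (s.map f).powerset, g T = ∑ S ∈ s.powerset, g (S.map f) := by
  refine (Finset.sum_nbij (fun S => S.map f) ?_ ?_ ?_ ?_).symm
  · intro S hS
    rw [Finset.mem_powerset] at hS ⊢
    exact Finset.map_subset_map.2 hS
  · intro S _ S' _ hSS'
    exact Finset.map_injective f hSS'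
  · intro T hT
    simp only [Finset.coe_powerset, Set.mem_preimage, Set.mem_powerset_iff,
      Finset.coe_subset, Set.mem_image] at hT ⊢
    obtain ⟨U, hU, rfl⟩ := Finset.subset_map_iff.1 (by exact_mod_cast hT)
    exact ⟨U, by simpa using hU, rfl⟩
  · intro S _
    rfl

lemma prod_powerset_map {α β M : Type*} [DecidableEq α] [DecidableEq β] [CommMonoid M]
    (s : Finset α) (f : α ↪ β) (g : Finset β → M) :
    ∏ T ∈ (s.map f).powerset, g T = ∏ S ∈ s.powerset, g (S.map f) := by
  refine (Finset.prod_nbij (fun S => S.map f) ?_ ?_ ?_ ?_).symm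
  · intro S hS
    rw [Finset.mem_powerset] at hS ⊢
    exact Finset.map_subset_map.2 hS
  · intro S _ S' _ hSS'
    exact Finset.map_injective f hSS'
  · intro T hT
    simp only [Finset.coe_powerset, Set.mem_preimage, Set.mem_powerset_iff,
      Finset.coe_subset, Set.mem_image] at hT ⊢
    obtain ⟨U, hU, rfl⟩ := Finset.subset_map_iff.1 (by exact_mod_cast hT)
    exact ⟨U, by simpa using hU, rfl⟩
  · intro S _
    rfl

lemma zero_notMem_map_succ {d : ℕ} (S : Finset (Fin d)) :
    (0 : Fin (d+1)) ∉ S.map (Fin.succEmb d) := by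
  simp only [Finset.mem_map, Fin.succEmb]
  rintro ⟨i, _, hi⟩
  exact Fin.succ_ne_zero i hi

lemma prod_powerset_succ {d : ℕ} (f : Finset (Fin (d+1)) → ℝ) :
    ∏ S ∈ (Finset.univ : Finset (Fin (d+1))).powerset, f S
      = ∏ S' ∈ (Finset.univ : Finset (Fin d)).powerset,
          (f (S'.map (Fin.succEmb d)) * f (insert 0 (S'.map (Fin.succEmb d)))) := by
  rw [Fin.univ_succ, Finset.cons_eq_insert,
    Finset.prod_powerset_insert (by
      simpa using zero_notMem_map_succ (Finset.univ : Finset (Fin d))) f]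
  rw [prod_powerset_map, prod_powerset_map, Finset.prod_mul_distrib]
  rfl

lemma Dmix_slice {d : ℕ} (φ : (Fin (d+1) → ℤ) → ℂ) (S : Finset (Fin d)) (t : ℤ) :
    Dmix S (fun ζ' => φ (Fin.cons t ζ'))
      = fun ζ' => Dmix (S.map (Fin.succEmb d)) φ (Fin.cons t ζ') := by
  funext ζ'
  rw [Dmix, Dmix, sum_powerset_map]
  refine Finset.sum_congr rfl fun T hT => ?_
  rw [Finset.card_map, Finset.card_map]
  congr 1
  congr 1
  funext j
  induction j using Fin.cases with
  | zero =>
    have h0 : (0 : Fin (d+1)) ∉ T.map (Fin.succEmb d) := zero_notMem_map_succ T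
    simp [h0]
  | succ i =>
    have : (Fin.succEmb d) i ∈ T.map (Fin.succEmb d) ↔ i ∈ T := Finset.mem_map' _
    simp only [Fin.cons_succ]
    rw [show ((Fin.succEmb d) i) = i.succ from rfl] at this
    rw [if_congr this rfl rfl]

/-- Product estimate over all mixed differences. -/
theorem agmon_product_estimate {d : ℕ} (φ : (Fin d → ℤ) → ℂ)
    (h : Summable fun ζ : Fin d → ℤ => ‖φ ζ‖ ^ 2) :
    lsup φ ^ (2 ^ d) ≤
      ∏ S ∈ (Finset.univ : Finset (Fin d)).powerset, l2 (Dmix S φ) := by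
  induction d with
  | zero =>
    have huniv : (Finset.univ : Finset (Fin 0)) = ∅ := rfl
    rw [huniv, Finset.powerset_empty, Finset.prod_singleton, Dmix_empty, pow_zero, pow_one]
    rw [lsup, ciSup_unique, l2]
    have : ∑' ζ : Fin 0 → ℤ, ‖φ ζ‖ ^ 2 = ‖φ default‖ ^ 2 := by
      rw [tsum_eq_single default (fun b hb => absurd (Subsingleton.elim b default) hb)]
    rw [this, Real.sqrt_sq (norm_nonneg _)]
    exact le_of_eq (congrArg _ (congrArg φ (Subsingleton.elim _ _)))
  | succ d ih =>
    set e := Fin.consEquiv (fun _ : Fin (d+1) => ℤ)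
    have haP : Summable fun p : ℤ × (Fin d → ℤ) => ‖φ (Fin.cons p.1 p.2)‖ ^ 2 :=
      h.comp_injective e.injective
    have hRHS0 : (0:ℝ) ≤ ∏ S ∈ (Finset.univ : Finset (Fin (d+1))).powerset, l2 (Dmix S φ) :=
      Finset.prod_nonneg fun S _ => Real.sqrt_nonneg _
    refine lsup_pow_le φ hRHS0 (by positivity) ?_
    intro ζ
    set t := ζ 0 with ht
    set ζ0 := Fin.tail ζ with hζ0
    set ψ : (Fin d → ℤ) → ℂ := fun ζ' => φ (Fin.cons t ζ') with hψ
    have hψsum : Summable fun ζ' : Fin d → ℤ => ‖ψ ζ'‖ ^ 2 := haP.prod_factor t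
    have hζeq : φ ζ = ψ ζ0 := by
      rw [hψ]
      simp only
      rw [ht, hζ0, Fin.cons_self_tail]
    have hb : ∀ ζ', ‖ψ ζ'‖ ≤ l2 ψ := norm_le_l2 hψsum
    have hle1 : ‖φ ζ‖ ≤ lsup ψ := by
      rw [hζeq]
      exact le_ciSup ⟨l2 ψ, Set.forall_mem_range.2 hb⟩ ζ0
    have hih := ih ψ hψsum
    have hstep : ∀ S' ∈ (Finset.univ : Finset (Fin d)).powerset,
        l2 (Dmix S' ψ) ^ 2
          ≤ l2 (Dmix (S'.map (Fin.succEmb d)) φ)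
            * l2 (Dmix (insert 0 (S'.map (Fin.succEmb d))) φ) := by
      intro S' _
      set a := Dmix (S'.map (Fin.succEmb d)) φ with hadef
      have hasum : Summable fun ζ : Fin (d+1) → ℤ => ‖a ζ‖ ^ 2 := summable_Dmix h _
      have hslice : Dmix S' ψ = fun ζ' => a (Fin.cons t ζ') := Dmix_slice φ S' t
      have h1 : l2 (Dmix S' ψ) ^ 2 = ∑' ζ' : Fin d → ℤ, ‖a (Fin.cons t ζ')‖ ^ 2 := by
        rw [hslice, l2, Real.sq_sqrt (tsum_nonneg fun _ => sq_nonneg _)]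
      rw [h1, Dmix_insert 0 _ (zero_notMem_map_succ S') φ]
      exact slice_sq_le a hasum t
    calc ‖φ ζ‖ ^ 2 ^ (d+1)
        = (‖φ ζ‖ ^ 2 ^ d) ^ 2 := by rw [← pow_mul, pow_succ]
      _ ≤ (lsup ψ ^ 2 ^ d) ^ 2 :=
          pow_le_pow_left₀ (pow_nonneg (norm_nonneg _) _)
            (pow_le_pow_left₀ (norm_nonneg _) hle1 _) 2
      _ ≤ (∏ S' ∈ (Finset.univ : Finset (Fin d)).powerset, l2 (Dmix S' ψ)) ^ 2 :=
          pow_le_pow_left₀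
            (pow_nonneg (Real.iSup_nonneg fun ζ' => norm_nonneg _) _) hih 2
      _ = ∏ S' ∈ (Finset.univ : Finset (Fin d)).powerset, l2 (Dmix S' ψ) ^ 2 := by
          rw [Finset.prod_pow]
      _ ≤ ∏ S' ∈ (Finset.univ : Finset (Fin d)).powerset,
            (l2 (Dmix (S'.map (Fin.succEmb d)) φ)
              * l2 (Dmix (insert 0 (S'.map (Fin.succEmb d))) φ)) := by
          exact Finset.prod_le_prod (fun S' _ => sq_nonneg _) hstep
      _ = ∏ S ∈ (Finset.univ : Finset (Fin (d+1))).powerset, l2 (Dmix S φ) := by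
          rw [prod_powerset_succ (fun S => l2 (Dmix S φ))]
end
end
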